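/- arXiv:1008.4021 — 5 statements merged into one kernel-verified Lean document; each statement's English description precedes it below -/
import Mathlib

section
/- For a rational function φ(t) = ∏_m (1-t^m)^{s_m} (finite product over positive integers m, integer exponents s_m) and a positive integer k, define the k-th power φ^{(k)}(t) = ∏_m (1-t^{m/gcd(m,k)})^{gcd(m,k)·s_m}. Then for positive integers k and l, (φ^{(k)})^{(l)} = φ^{(kl)}. -/
/-- The `k`-th "power" operation on rational functions of the form
`∏_m (1-t^m)^{s_m}`, encoded by the finitely supported exponent function
`s : ℕ →₀ ℤ`: the factor `(1-t^m)^{s m}` is sent to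
`(1-t^{m/gcd(m,k)})^{gcd(m,k)·s m}`. -/
noncomputable def powOp (k : ℕ) (s : ℕ →₀ ℤ) : ℕ →₀ ℤ :=
  s.sum fun m v => Finsupp.single (m / Nat.gcd m k) ((Nat.gcd m k : ℤ) * v)

lemma gcd_key (m k l : ℕ) (hm : 0 < m) :
    Nat.gcd m k * Nat.gcd (m / Nat.gcd m k) l = Nat.gcd m (k * l) := by
  set g := Nat.gcd m k with hg
  have hgpos : 0 < g := Nat.gcd_pos_of_pos_left k hm
  have hco : Nat.Coprime (m / g) (k / g) := Nat.coprime_div_gcd_div_gcd hgpos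
  have hm' : g * (m / g) = m := Nat.mul_div_cancel' (Nat.gcd_dvd_left m k)
  have hk' : g * (k / g) = k := Nat.mul_div_cancel' (Nat.gcd_dvd_right m k)
  calc g * Nat.gcd (m / g) l
      = g * Nat.gcd (m / g) ((k / g) * l) := by
        rw [Nat.Coprime.gcd_mul_left_cancel_right l hco.symm]
    _ = Nat.gcd (g * (m / g)) (g * ((k / g) * l)) := (Nat.gcd_mul_left g _ _).symm
    _ = Nat.gcd m (k * l) := by rw [hm', ← mul_assoc, hk']

/-- `(φ^{(k)})^{(l)} = φ^{(kl)}` for `φ = ∏_m (1-t^m)^{s_m}` with all `m` positive. -/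
theorem powOp_powOp (k l : ℕ) (hk : 0 < k) (hl : 0 < l) (s : ℕ →₀ ℤ)
    (hs : ∀ m ∈ s.support, 0 < m) :
    powOp l (powOp k s) = powOp (k * l) s := by
  unfold powOp
  rw [Finsupp.sum_sum_index (fun i => by simp)
    (fun i b₁ b₂ => by rw [mul_add, Finsupp.single_add])]
  refine Finsupp.sum_congr fun m hm => ?_
  rw [Finsupp.sum_single_index (by simp)]
  have hmp := hs m hm
  have h1 := gcd_key m k l hmp
  have h2 : m / Nat.gcd m k / Nat.gcd (m / Nat.gcd m k) l = m / Nat.gcd m (k * l) := by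
    rw [Nat.div_div_eq_div_mul, h1]
  rw [h2, ← mul_assoc, ← Nat.cast_mul, mul_comm (Nat.gcd (m / Nat.gcd m k) l), h1]
end

section
/- Let p_1,…,p_n be positive integers, d = p_1⋯p_n, and let w_j = p_1⋯p_{j−1}⟨p_{j+1},…,p_n⟩ be the canonical weights of the chain polynomial; let c = gcd(w_1,…,w_n). Then any common divisor of p_s and ⟨p_{s+1},…,p_n⟩ divides all the canonical weights w_1,…,w_n of the chain polynomial (and hence divides c). -/
/-- `⟨q_1,…,q_k⟩ := ∑_{j=1}^{k} (−1)^{j−1} q_j ⋯ q_k + (−1)^k`, `⟨⟩ = 1`. -/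
def bracket (l : List ℤ) : ℤ :=
  (∑ j ∈ Finset.range l.length, (-1) ^ j * (l.drop j).prod) + (-1) ^ l.length

lemma bracket_cons (a : ℤ) (l : List ℤ) : bracket (a :: l) = a * l.prod - bracket l := by
  unfold bracket
  rw [List.length_cons, Finset.sum_range_succ']
  simp only [List.drop_succ_cons, List.drop_zero, pow_succ, pow_zero, one_mul]
  rw [Finset.sum_congr rfl
    (fun j _ => show (-1:ℤ)^j * (-1) * ((l.drop j).prod) = -((-1)^j * (l.drop j).prod) by ring)]
  rw [Finset.sum_neg_distrib, List.prod_cons]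
  ring

lemma dvd_bracket_append (q : ℤ) (m t : List ℤ) (h1 : q ∣ bracket t) (h2 : q ∣ t.prod) :
    q ∣ bracket (m ++ t) := by
  induction m with
  | nil => simpa using h1
  | cons a m ih =>
    rw [List.cons_append, bracket_cons]
    exact dvd_sub (Dvd.dvd.mul_left (by rw [List.prod_append]; exact h2.mul_left _) a) ih

/-- Any common divisor of `p_s` and `⟨p_{s+1},…,p_n⟩` divides all the canonical
weights `w_j = p_1⋯p_{j−1}·⟨p_{j+1},…,p_n⟩` of the chain polynomial. -/
theorem common_divisor_dvd_weights (n : ℕ) (p : Fin n → ℤ) (hp : ∀ i, 0 < p i)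
    (s : Fin n) (q : ℤ) (hq1 : q ∣ p s)
    (hq2 : q ∣ bracket ((List.ofFn p).drop ((s : ℕ) + 1))) :
    ∀ j : Fin n,
      q ∣ ((List.ofFn p).take (j : ℕ)).prod *
            bracket ((List.ofFn p).drop ((j : ℕ) + 1)) := by
  intro j
  set l := List.ofFn p with hl
  have hs : (s : ℕ) < l.length := by simp [hl]
  have hdrop_s : l.drop (s : ℕ) = p s :: l.drop ((s : ℕ) + 1) := by
    rw [List.drop_eq_getElem_cons hs]
    simp [hl]
  rcases le_or_gt ((j : ℕ) + 1) (s : ℕ) with h | h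
  · -- j + 1 ≤ s : q divides the bracket factor
    apply Dvd.dvd.mul_left
    have : l.drop ((j : ℕ) + 1) =
        (l.drop ((j : ℕ) + 1)).take ((s : ℕ) - ((j : ℕ) + 1)) ++ l.drop (s : ℕ) := by
      nth_rewrite 1 [← List.take_append_drop ((s : ℕ) - ((j : ℕ) + 1)) (l.drop ((j : ℕ) + 1))]
      have he : ((j : ℕ) + 1) + ((s : ℕ) - ((j : ℕ) + 1)) = (s : ℕ) := by omega
      rw [List.drop_drop, he]
    rw [this]
    apply dvd_bracket_append
    · rw [hdrop_s, bracket_cons]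
      exact dvd_sub (hq1.mul_right _) hq2
    · rw [hdrop_s, List.prod_cons]
      exact hq1.mul_right _
  · -- s < j + 1, i.e. s ≤ j... two subcases: s < j (prefix) or s = j
    rcases lt_or_eq_of_le (Nat.lt_succ_iff.mp h) with h' | h'
    · -- s < j : p s is in the prefix product
      apply Dvd.dvd.mul_right
      have hmem : p s ∈ l.take (j : ℕ) := by
        have hlen : (s : ℕ) < (l.take (j : ℕ)).length := by
          rw [List.length_take, hl, List.length_ofFn]
          omega
        have : (l.take (j : ℕ))[(s : ℕ)]'hlen = p s := by
          rw [List.getElem_take]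
          simp [hl]
        rw [← this]
        exact List.getElem_mem hlen
      exact hq1.trans (List.dvd_prod hmem)
    · -- s = j
      have : ((j : ℕ) : ℕ) = (s : ℕ) := h'.symm
      rw [this]
      exact (hq2.mul_left _)
end

section
/- Let f be the chain-type polynomial with exponents p_1,…,p_n ≥ 1, canonical weights w_j = p_1⋯p_{j−1}⟨p_{j+1},…,p_n⟩, degree d = p_1⋯p_n, and c = gcd(w_1,…,w_n). Then the congruence system E·m ≡ (1,…,1)^T mod c, where E is the chain exponent matrix, has exactly c solutions m ∈ (ℤ/c)^n, given explicitly by m_1 = m arbitrary, and m_j ≡ (−1)^j⟨p_2,…,p_{j−1}⟩ + (−1)^{j−1} m·p_1⋯p_{j−1} mod c for j ≥ 2. -/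
/-- The exponent matrix of the chain polynomial. -/
def chainE {n : ℕ} (p : Fin n → ℤ) : Matrix (Fin n) (Fin n) ℤ :=
  Matrix.of fun i j => if j = i then p i else if (j : ℕ) = (i : ℕ) + 1 then 1 else 0

/-- The explicit solution of the congruence system for the chain polynomial:
`m_1 = a` arbitrary and, for `j ≥ 2` (here `j : Fin n` is 0-based, so paper index
`j+1`), `m_j ≡ (−1)^j ⟨p_2,…,p_{j−1}⟩ + (−1)^{j−1}·a·p_1⋯p_{j−1} mod c`. -/
noncomputable def chainSol {n : ℕ} (p : Fin n → ℤ) (c : ℕ) (a : ZMod c) :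
    Fin n → ZMod c := fun j =>
  if (j : ℕ) = 0 then a
  else ((-1 : ZMod c) ^ ((j : ℕ) + 1)) *
        ((bracket (((List.ofFn p).drop 1).take ((j : ℕ) - 1)) : ℤ) : ZMod c)
      + ((-1 : ZMod c) ^ (j : ℕ)) * a *
        ((((List.ofFn p).take (j : ℕ)).prod : ℤ) : ZMod c)

/-! Rows `1, …, n-1` of `E m = 1` read `p_i m_i + m_{i+1} = 1`, so they determine `m` from `m_1`,
and `chainSol` is the closed form of this recursion. It satisfies
`p_i m_i = 1 + (-1)^i ⟨p_2,…,p_i⟩ - (-1)^i m_1 p_1⋯p_i` (by `⟨q_1,…,q_k,q⟩ = q⟨q_1,…,q_k⟩ + (-1)^(k+1)`),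
and for `i = n` the error terms are `±w_1` and `±m_1 p_n w_n`, which vanish mod `c`. So the last row
holds automatically and each `m_1 ∈ ℤ/c` gives exactly one solution. -/

lemma bracket_nil : bracket [] = 1 := by simp [bracket]

lemma bracket_append_singleton (l : List ℤ) (q : ℤ) :
    bracket (l ++ [q]) = q * bracket l + (-1) ^ (l.length + 1) := by
  have hdrop : ∀ j ∈ Finset.range l.length,
      (-1 : ℤ) ^ j * ((l ++ [q]).drop j).prod = (-1) ^ j * (l.drop j).prod * q := by
    intro j hj
    simp [List.drop_append_of_le_length (Finset.mem_range.mp hj).le, mul_assoc]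
  simp only [bracket, List.length_append, List.length_singleton, Finset.sum_range_succ,
    Finset.sum_congr rfl hdrop, ← Finset.sum_mul, List.drop_left]
  simp only [List.prod_singleton]
  ring

lemma mulVec_chainE_map_apply {n : ℕ} {R : Type*} [Ring R] (p : Fin n → ℤ) (m : Fin n → R)
    (i : Fin n) : ((chainE p).map (Int.cast : ℤ → R)).mulVec m i
      = p i * m i + if h : (i : ℕ) + 1 < n then m ⟨i + 1, h⟩ else 0 := by
  simp only [Matrix.mulVec, dotProduct, Matrix.map_apply, chainE, Matrix.of_apply]
  split_ifs with h
  · rw [Fintype.sum_eq_add i ⟨i + 1, h⟩ (by simp [Fin.ext_iff])]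
    · simp [Fin.ext_iff]
    · rintro j ⟨hji, hjs⟩
      simp [hji, Fin.ext_iff.not.mp hjs]
  · rw [Fintype.sum_eq_single i]
    · simp
    · intro j hji
      simp [hji, show (j : ℕ) ≠ i + 1 by omega]

section ChainSol

variable {n : ℕ} (p : Fin n → ℤ)

lemma take_tail_ofFn_succ (j : ℕ) (hj : j + 1 < n) :
    ((List.ofFn p).drop 1).take (j + 1) = ((List.ofFn p).drop 1).take j ++ [p ⟨j + 1, hj⟩] := by
  rw [← List.take_concat_get' _ _ (by simp; omega)]
  simp

lemma prod_take_ofFn_succ (j : ℕ) (hj : j < n) :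
    ((List.ofFn p).take (j + 1)).prod = ((List.ofFn p).take j).prod * p ⟨j, hj⟩ := by
  simp [List.prod_take_succ (List.ofFn p) j (by simpa using hj)]

variable (c : ℕ) (a : ZMod c)

lemma chainSol_zero (h : 0 < n) : chainSol p c a ⟨0, h⟩ = a := if_pos rfl

lemma chainSol_succ (j : ℕ) (hj : j + 1 < n) :
    chainSol p c a ⟨j + 1, hj⟩ = (-1) ^ j * (bracket (((List.ofFn p).drop 1).take j) : ZMod c)
      - (-1) ^ j * a * (((List.ofFn p).take j).prod * p ⟨j, by omega⟩ : ℤ) := by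
  simp only [chainSol, Nat.add_sub_cancel, prod_take_ofFn_succ p j (by omega),
    if_neg (Nat.succ_ne_zero j), pow_succ]
  ring

lemma mul_chainSol (j : ℕ) (hj : j < n) :
    p ⟨j, hj⟩ * chainSol p c a ⟨j, hj⟩
      = 1 - (-1) ^ j * (bracket (((List.ofFn p).drop 1).take j) : ZMod c)
        + (-1) ^ j * a * (((List.ofFn p).take j).prod * p ⟨j, hj⟩ : ℤ) := by
  rcases j with _ | j
  · simp [chainSol_zero, bracket_nil, mul_comm]
  · rw [chainSol_succ, take_tail_ofFn_succ p j hj, bracket_append_singleton,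
      List.length_take_of_le (by simp; omega), prod_take_ofFn_succ p j (by omega)]
    have hsq : ((-1 : ZMod c)) ^ j * (-1) ^ j = 1 := by rw [← mul_pow]; simp
    push_cast
    linear_combination hsq

lemma chainSol_row (j : ℕ) (hj : j + 1 < n) :
    p ⟨j, by omega⟩ * chainSol p c a ⟨j, by omega⟩ + chainSol p c a ⟨j + 1, hj⟩ = 1 := by
  rw [mul_chainSol, chainSol_succ]
  ring

end ChainSol

section Solutions

variable {k : ℕ} (p : Fin (k + 1) → ℤ) (c : ℕ)

lemma chainSol_injective : Function.Injective (chainSol p c) :=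
  fun a b h => by simpa only [chainSol_zero] using congrFun h ⟨0, k.succ_pos⟩

lemma eq_chainSol_of_mulVec_eq_one {m : Fin (k + 1) → ZMod c}
    (h : ((chainE p).map (Int.cast : ℤ → ZMod c)).mulVec m = fun _ => 1) :
    m = chainSol p c (m 0) := by
  funext ⟨j, hj⟩
  induction j with
  | zero => exact (chainSol_zero p c _ hj).symm
  | succ j ih =>
    have hrow := congrFun h ⟨j, by omega⟩
    rw [mulVec_chainE_map_apply, dif_pos hj, ih (by omega)] at hrow
    exact add_left_cancel (hrow.trans (chainSol_row p c _ j hj).symm)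

lemma mul_chainSol_last (a : ZMod c) :
    p (Fin.last k) * chainSol p c a (Fin.last k)
      = 1 - (-1) ^ k * (bracket ((List.ofFn p).drop 1) : ZMod c)
        + (-1) ^ k * a * (((List.ofFn p).take k).prod * p (Fin.last k) : ℤ) := by
  have htail : ((List.ofFn p).drop 1).take k = (List.ofFn p).drop 1 :=
    List.take_of_length_le (by simp)
  have h := mul_chainSol p c a k (Nat.lt_succ_self k)
  rwa [htail] at h

lemma mulVec_chainSol {a : ZMod c}
    (hlast : p (Fin.last k) * chainSol p c a (Fin.last k) = 1) :
    ((chainE p).map (Int.cast : ℤ → ZMod c)).mulVec (chainSol p c a) = fun _ => 1 := by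
  funext i
  rw [mulVec_chainE_map_apply]
  split_ifs with h
  · exact chainSol_row p c a i h
  · obtain rfl : i = Fin.last k := Fin.ext (by simp; omega)
    rwa [add_zero]

end Solutions

theorem chain_congruence_solutions_general (n : ℕ) (hn : 1 ≤ n) (p : Fin n → ℤ)
    (w : Fin n → ℤ)
    (hw : ∀ j, w j = ((List.ofFn p).take (j : ℕ)).prod *
        bracket ((List.ofFn p).drop ((j : ℕ) + 1)))
    (c : ℕ) (hc : (c : ℤ) = Finset.univ.gcd w) :
    {m : Fin n → ZMod c |
        ((chainE p).map (Int.cast : ℤ → ZMod c)).mulVec m = fun _ => 1}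
      = Set.range (chainSol p c) ∧
    Nat.card {m : Fin n → ZMod c //
        ((chainE p).map (Int.cast : ℤ → ZMod c)).mulVec m = fun _ => 1} = c := by
  obtain ⟨k, rfl⟩ : ∃ k, n = k + 1 := ⟨n - 1, by omega⟩
  have hw_zero : ∀ j, (w j : ZMod c) = 0 := fun j =>
    (ZMod.intCast_zmod_eq_zero_iff_dvd _ _).2 (hc ▸ Finset.gcd_dvd (Finset.mem_univ j))
  have hlast (a : ZMod c) : p (Fin.last k) * chainSol p c a (Fin.last k) = 1 := by
    have hw0 : w 0 = bracket ((List.ofFn p).drop 1) := by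
      simp only [hw, Fin.val_zero, List.take_zero, List.prod_nil, one_mul, zero_add]
    have hwk : w (Fin.last k) = ((List.ofFn p).take k).prod := by
      rw [hw, Fin.val_last, List.drop_eq_nil_of_le (by simp), bracket_nil, mul_one]
    rw [mul_chainSol_last, ← hw0, ← hwk, Int.cast_mul, hw_zero, hw_zero]
    ring
  have hsol : {m : Fin (k + 1) → ZMod c |
      ((chainE p).map (Int.cast : ℤ → ZMod c)).mulVec m = fun _ => 1}
      = Set.range (chainSol p c) :=
    Set.ext fun m => ⟨fun h => ⟨m 0, (eq_chainSol_of_mulVec_eq_one p c h).symm⟩,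
      by rintro ⟨a, rfl⟩; exact mulVec_chainSol p c (hlast a)⟩
  refine ⟨hsol, ?_⟩
  rw [← Set.coe_ofPred, hsol, Nat.card_range_of_injective (chainSol_injective p c),
    Nat.card_zmod]

/-- For the chain polynomial with canonical weights
`w_j = p_1⋯p_{j−1}⟨p_{j+1},…,p_n⟩` and `c = gcd(w_1,…,w_n)`, the congruence
system `E·m ≡ (1,…,1)^T mod c` has exactly `c` solutions in `(ℤ/c)^n`, given
explicitly by `chainSol`. -/
theorem chain_congruence_solutions (n : ℕ) (hn : 1 ≤ n) (p : Fin n → ℤ)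
    (hp : ∀ i, 0 < p i) (w : Fin n → ℤ)
    (hw : ∀ j, w j = ((List.ofFn p).take (j : ℕ)).prod *
        bracket ((List.ofFn p).drop ((j : ℕ) + 1)))
    (c : ℕ) (hc : (c : ℤ) = Finset.univ.gcd w) :
    {m : Fin n → ZMod c |
        ((chainE p).map (Int.cast : ℤ → ZMod c)).mulVec m = fun _ => 1}
      = Set.range (chainSol p c) ∧
    Nat.card {m : Fin n → ZMod c //
        ((chainE p).map (Int.cast : ℤ → ZMod c)).mulVec m = fun _ => 1} = c :=
  chain_congruence_solutions_general n hn p w hw c hc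
end

section
/- Saito duality of the roots for chain type: let p_1,…,p_n ≥ 1, d = p_1⋯p_n. Define ζ_1(t) = (1−t)^{−1} ∏_{j=2}^n (1−t^{p_j⋯p_n})^{(−1)^{n−j}} · (1−t^d)^{(−1)^{n−1}} and ζ_2(t) = (1−t)^{−1} ∏_{j=2}^n (1−t^{p_1⋯p_{j−1}})^{(−1)^j} · (1−t^d)^{(−1)^{n−1}}. Then the Saito dual of ζ_1 with respect to d equals ζ_2^{(−1)^{n−1}}, i.e. ζ_1*(t) = ζ_2(t)^{(−1)^{n−1}}. -/
/-! Reading off `d / (p_j⋯p_n) = p_1⋯p_{j-1}`, the dual of the exponent `(-1)^(n-j)` at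
`p_j⋯p_n` is `-(-1)^(n-j)` at `p_1⋯p_{j-1}`, and `-(-1)^(n-j) = (-1)^(n-1) (-1)^j`. The two
boundary terms `(1-t)^{-1}` and `(1-t^d)^{(-1)^{n-1}}` are exchanged by the duality, and their
exponents are related by the same sign `(-1)^(n-1)`. -/

/-- Saito dual with respect to `d`: sends the exponent function `s` of
`∏_{m|d}(1-t^m)^{s_m}` to `m ↦ -s(d/m)`. -/
noncomputable def saitoDual (d : ℕ) (s : ℕ →₀ ℤ) : ℕ →₀ ℤ :=
  s.sum fun m v => Finsupp.single (d / m) (-v)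

lemma saitoDual_single (d a : ℕ) (v : ℤ) :
    saitoDual d (Finsupp.single a v) = Finsupp.single (d / a) (-v) :=
  Finsupp.sum_single_index (by simp)

lemma saitoDual_add (d : ℕ) (s t : ℕ →₀ ℤ) :
    saitoDual d (s + t) = saitoDual d s + saitoDual d t :=
  Finsupp.sum_add_index' (by simp) fun _ _ _ => by simp [Finsupp.single_add, add_comm]

noncomputable def saitoDualAddHom (d : ℕ) : (ℕ →₀ ℤ) →+ (ℕ →₀ ℤ) where
  toFun := saitoDual d
  map_zero' := Finsupp.sum_zero_index
  map_add' := saitoDual_add d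

lemma saitoDual_sum {ι : Type*} (d : ℕ) (S : Finset ι) (f : ι → ℕ →₀ ℤ) :
    saitoDual d (∑ j ∈ S, f j) = ∑ j ∈ S, saitoDual d (f j) :=
  map_sum (saitoDualAddHom d) f S

lemma List.prod_div_prod_drop (L : List ℕ) (k : ℕ) (h : 0 < (L.drop k).prod) :
    L.prod / (L.drop k).prod = (L.take k).prod := by
  rw [← L.prod_take_mul_prod_drop k, Nat.mul_div_cancel _ h]

lemma saitoDual_single_prod_drop (L : List ℕ) (hL : ∀ x ∈ L, 0 < x) (k : ℕ) (v : ℤ) :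
    saitoDual L.prod (Finsupp.single (L.drop k).prod v) = Finsupp.single (L.take k).prod (-v) := by
  rw [saitoDual_single, L.prod_div_prod_drop k
    (List.prod_pos fun x hx => hL x (List.mem_of_mem_drop hx))]

lemma saitoDual_single_prod (L : List ℕ) (hL : ∀ x ∈ L, 0 < x) (v : ℤ) :
    saitoDual L.prod (Finsupp.single L.prod v) = Finsupp.single 1 (-v) :=
  saitoDual_single_prod_drop L hL 0 v

lemma neg_one_pow_pred_mul_neg_one_pow {R : Type*} [Ring R] {n j : ℕ} (hj : 1 ≤ j)
    (hjn : j ≤ n) : (-1 : R) ^ (n - 1) * (-1) ^ j = -(-1) ^ (n - j) := by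
  rw [← pow_add, show n - 1 + j = n - j + 2 * (j - 1) + 1 by omega, pow_succ, pow_add,
    pow_mul]
  simp

theorem chain_root_saito_duality_general (n : ℕ) (p : Fin n → ℕ)
    (hp : ∀ i, 1 ≤ p i) :
    saitoDual ((List.ofFn p).prod)
        (Finsupp.single 1 (-1 : ℤ)
          + (∑ j ∈ Finset.Icc 2 n,
              Finsupp.single (((List.ofFn p).drop (j - 1)).prod) ((-1 : ℤ) ^ (n - j)))
          + Finsupp.single ((List.ofFn p).prod) ((-1 : ℤ) ^ (n - 1)))
      = ((-1 : ℤ) ^ (n - 1)) •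
        (Finsupp.single 1 (-1 : ℤ)
          + (∑ j ∈ Finset.Icc 2 n,
              Finsupp.single (((List.ofFn p).take (j - 1)).prod) ((-1 : ℤ) ^ j))
          + Finsupp.single ((List.ofFn p).prod) ((-1 : ℤ) ^ (n - 1))) := by
  have hpos : ∀ x ∈ List.ofFn p, 0 < x := by
    simpa [List.mem_ofFn, Nat.one_le_iff_ne_zero, Nat.pos_iff_ne_zero] using hp
  have hsign : ∀ j ∈ Finset.Icc 2 n,
      Finsupp.single ((List.ofFn p).take (j - 1)).prod ((-1 : ℤ) ^ (n - 1) * (-1) ^ j)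
        = Finsupp.single ((List.ofFn p).take (j - 1)).prod (-(-1) ^ (n - j)) := by
    intro j hj
    rw [Finset.mem_Icc] at hj
    rw [neg_one_pow_pred_mul_neg_one_pow (by omega) hj.2]
  simp only [saitoDual_add, saitoDual_sum, saitoDual_single_prod_drop _ hpos,
    saitoDual_single_prod _ hpos, saitoDual_single, Nat.div_one, neg_neg, smul_add,
    Finset.smul_sum, Finsupp.smul_single, smul_eq_mul, mul_neg_one,
    pow_mul_pow_eq_one (n - 1) (by norm_num : (-1 : ℤ) * -1 = 1)]
  rw [Finset.sum_congr rfl hsign]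
  abel

/-- Saito duality of the roots for chain type: with `d = p_1⋯p_n`,
`ζ_1 = (1−t)^{−1} ∏_{j=2}^n (1−t^{p_j⋯p_n})^{(−1)^{n−j}} (1−t^d)^{(−1)^{n−1}}`
and
`ζ_2 = (1−t)^{−1} ∏_{j=2}^n (1−t^{p_1⋯p_{j−1}})^{(−1)^j} (1−t^d)^{(−1)^{n−1}}`,
one has `ζ_1* = ζ_2^{(−1)^{n−1}}` (Saito dual with respect to `d`). -/
theorem chain_root_saito_duality (n : ℕ) (hn : 1 ≤ n) (p : Fin n → ℕ)
    (hp : ∀ i, 1 ≤ p i) :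
    saitoDual ((List.ofFn p).prod)
        (Finsupp.single 1 (-1 : ℤ)
          + (∑ j ∈ Finset.Icc 2 n,
              Finsupp.single (((List.ofFn p).drop (j - 1)).prod) ((-1 : ℤ) ^ (n - j)))
          + Finsupp.single ((List.ofFn p).prod) ((-1 : ℤ) ^ (n - 1)))
      = ((-1 : ℤ) ^ (n - 1)) •
        (Finsupp.single 1 (-1 : ℤ)
          + (∑ j ∈ Finset.Icc 2 n,
              Finsupp.single (((List.ofFn p).take (j - 1)).prod) ((-1 : ℤ) ^ j))
          + Finsupp.single ((List.ofFn p).prod) ((-1 : ℤ) ^ (n - 1))) :=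
  chain_root_saito_duality_general n p hp
end

section
/- Let p be an odd integer ≥ 3. The rational function ζ(t) = (1−t²)(1−t^p)(1−t^{2p})^{p−2}/(1−t) has no formal root of degree p. (This is the reduced zeta function of f^T for f = x_1²x_2 + x_2^p + x_3^p.) -/
/-- For odd `p ≥ 3`, the rational function
`ζ(t) = (1−t²)(1−t^p)(1−t^{2p})^{p−2}/(1−t)` (the reduced monodromy zeta
function of `f^T` for `f = x_1²x_2 + x_2^p + x_3^p`) has no formal root of
degree `p`. -/
theorem no_root_of_degree_p (p : ℕ) (hp : 3 ≤ p) (hodd : Odd p) :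
    ¬ ∃ r : ℕ →₀ ℤ, powOp p r
        = Finsupp.single 2 (1 : ℤ) + Finsupp.single p 1
          + Finsupp.single (2 * p) ((p : ℤ) - 2) + Finsupp.single 1 (-1) := by
  rintro ⟨r, hr⟩
  -- Evaluate both sides at 2*p.
  have hL : (p : ℤ) ∣ (powOp p r) (2 * p) := by
    rw [powOp, Finsupp.sum_apply]
    apply Finset.dvd_sum
    intro m hm
    simp only [Finsupp.single_apply]
    split_ifs with h
    · -- m / gcd m p = 2*p, so p ∣ m, so gcd m p = p ... enough p ∣ gcd m p
      have hd : Nat.gcd m p ∣ m := Nat.gcd_dvd_left m p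
      have hm' : m = Nat.gcd m p * (2 * p) := by
        rw [← h, Nat.mul_div_cancel' hd]
      have hpm : p ∣ m := by
        rw [hm']; exact ⟨Nat.gcd m p * 2, by ring⟩
      have hpg : p ∣ Nat.gcd m p := Nat.dvd_gcd hpm dvd_rfl
      exact Dvd.dvd.mul_right (Int.natCast_dvd_natCast.mpr hpg) _
    · exact dvd_zero _
  rw [hr] at hL
  have h2p2 : (2 : ℕ) * p ≠ 2 := by omega
  have h2pp : (2 : ℕ) * p ≠ p := by omega
  have h2p1 : (2 : ℕ) * p ≠ 1 := by omega
  simp only [Finsupp.add_apply, Finsupp.single_apply, if_neg (Ne.symm h2p2),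
    if_neg (Ne.symm h2pp), if_neg (Ne.symm h2p1), if_pos rfl] at hL
  -- hL : p ∣ p - 2
  have h2 : (p : ℤ) ∣ 2 := by
    have := dvd_sub (dvd_refl (p : ℤ)) hL
    simpa using this
  have := Int.le_of_dvd (by norm_num) h2
  omega
end
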